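/- Suppose ρ_i and β_i are continuous on [0, b̄_i] and β_i(b)ρ_i(b) > 0 for all b ∈ (0, b̄_i], for every i ∈ I, and p is finite on all of ℝ^K. Let λ* be a minimizer of the dual function Q over ℝ^K satisfying the Unique Solution condition: for every (i,k) ∈ E with λ*_k < 1, the maximizer of b ↦ h_i(r_{ik}(1 − λ*_k), b) over [0, b̄_i] is unique. Then there exists (x*, b*) ∈ S maximizing (x,b) ↦ π(x,b) − (λ*)ᵀ v(x,b) over S such that Q(λ*) = F(x*, b*). -/

import Mathlib

/-!
Dualizing the constraint `w = v(x, b)` writes `Q(λ)` as `max_S (π - λᵀv) + max_w (λᵀw + u w)`, the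
value of one joint maximization of `π + u(w) + λᵀ(w - v)`. Finiteness of `p` makes `λᵀw + u(w)`
coercive uniformly near `λ*`, so after forcing the coordinates off `E` to zero and `w` into a large
ball the joint problem lives on a compact set. If the values of `w - v(x, b)` at joint maximizers
formed a convex set missing `0`, a direction `d` separating it from `0` would make `Q` decrease
along `λ* - t d` (follow the maximizers as `t → 0`). Hence some joint maximizer has
`w = v(x*, b*)`, which says `Q(λ*) = F(x*, b*)`. That set is `argmax_w - v(argmax_{x,b})`, convex as
soon as `v(argmax_{x,b})` is.

This is where the Unique Solution condition enters: on each edge with positive allocation a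
maximizer must bid the unique maximizer of `h_i(r_{ik}(1 - λ*_k), ·)`, or `0` when `λ*_k ≥ 1`
since positive bids then have negative surplus. With the bids fixed, the maximizers form a convex
set of allocations on which `v` is linear.
-/

open scoped BigOperators Classical

open Set Filter Topology Metric
open scoped Pointwise

section ArgMax

variable {α : Type*} {f : α → ℝ} {s : Set α} {x : α}

lemma setOf_isMaxOn_eq (hx : x ∈ s) (hmax : IsMaxOn f s x) :
    {y | y ∈ s ∧ IsMaxOn f s y} = s ∩ f ⁻¹' Ici (f x) := by
  ext y
  exact ⟨fun ⟨hy, hymax⟩ => ⟨hy, hymax hx⟩,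
    fun ⟨hy, hxy⟩ => ⟨hy, isMaxOn_iff.2 fun z hz => (hmax hz).trans hxy⟩⟩

lemma isCompact_setOf_isMaxOn [TopologicalSpace α] (hs : IsCompact s) (hf : ContinuousOn f s) :
    IsCompact {y | y ∈ s ∧ IsMaxOn f s y} := by
  rcases s.eq_empty_or_nonempty with rfl | hne
  · simp
  obtain ⟨x, hx, hmax⟩ := hs.exists_isMaxOn hne hf
  rw [setOf_isMaxOn_eq hx hmax]
  exact hf.upperSemicontinuousOn.isCompact_inter_preimage_Ici hs _

lemma convex_setOf_isMaxOn [AddCommMonoid α] [Module ℝ α] (hf : ConcaveOn ℝ s f) :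
    Convex ℝ {y | y ∈ s ∧ IsMaxOn f s y} := by
  rcases eq_empty_or_nonempty {y | y ∈ s ∧ IsMaxOn f s y} with he | ⟨x, hx, hmax⟩
  · rw [he]
    exact convex_empty
  rw [setOf_isMaxOn_eq hx hmax]
  exact hf.convex_ge _

lemma isMaxOn_univ_of_isMaxOn {t : Set α} {x₀ : α} (hx₀ : x₀ ∈ t)
    (hout : ∀ y ∉ t, f y ≤ f x₀) (hmax : IsMaxOn f t x) : IsMaxOn f univ x :=
  isMaxOn_iff.2 fun y _ => by
    by_cases hy : y ∈ t
    · exact hmax hy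
    · exact (hout y hy).trans (hmax hx₀)

lemma isMaxOn_prod_add_iff {β : Type*} {g : β → ℝ} {t : Set β} {y : β} (hx : x ∈ s) (hy : y ∈ t) :
    IsMaxOn (fun z : α × β => f z.1 + g z.2) (s ×ˢ t) (x, y) ↔
      IsMaxOn f s x ∧ IsMaxOn g t y := by
  refine ⟨fun h => ⟨fun x' hx' => ?_, fun y' hy' => ?_⟩, fun ⟨hf, hg⟩ =>
    isMaxOn_iff.2 fun z hz => add_le_add (hf hz.1) (hg hz.2)⟩
  · simpa using h (mk_mem_prod hx' hy)
  · simpa using h (mk_mem_prod hx hy')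

lemma setOf_isMaxOn_prod_add {β : Type*} {g : β → ℝ} {t : Set β} :
    {z | z ∈ s ×ˢ t ∧ IsMaxOn (fun z : α × β => f z.1 + g z.2) (s ×ˢ t) z} =
      {x | x ∈ s ∧ IsMaxOn f s x} ×ˢ {y | y ∈ t ∧ IsMaxOn g t y} := by
  ext ⟨x, y⟩
  exact ⟨fun ⟨⟨hx, hy⟩, h⟩ => ⟨⟨hx, ((isMaxOn_prod_add_iff hx hy).1 h).1⟩,
      ⟨hy, ((isMaxOn_prod_add_iff hx hy).1 h).2⟩⟩,
    fun ⟨⟨hx, hfx⟩, ⟨hy, hgy⟩⟩ => ⟨⟨hx, hy⟩, (isMaxOn_prod_add_iff hx hy).2 ⟨hfx, hgy⟩⟩⟩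

namespace EReal

lemma biSup_coe_eq_of_isMaxOn (hx : x ∈ s) (hmax : IsMaxOn f s x) :
    ⨆ y ∈ s, (f y : EReal) = f x :=
  le_antisymm (iSup₂_le fun _ hy => EReal.coe_le_coe (hmax hy)) (le_iSup₂_of_le x hx le_rfl)

lemma iSup_coe_eq_of_isMaxOn (hmax : IsMaxOn f univ x) : ⨆ y, (f y : EReal) = f x := by
  simpa using biSup_coe_eq_of_isMaxOn (mem_univ x) hmax

lemma bddAbove_range_of_iSup_coe_ne_top (h : ⨆ y, (f y : EReal) ≠ ⊤) : BddAbove (range f) := by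
  refine ⟨(⨆ y, (f y : EReal)).toReal, forall_mem_range.2 fun y => ?_⟩
  have hle : (f y : EReal) ≤ ⨆ y, (f y : EReal) := le_iSup (fun y => (f y : EReal)) y
  rw [← EReal.coe_toReal h (ne_bot_of_le_ne_bot (EReal.coe_ne_bot _) hle)] at hle
  exact EReal.coe_le_coe_iff.1 hle

end EReal

end ArgMax

lemma biSup_eq_biSup_of_mapsTo {α β : Type*} [CompleteLattice β] {F : α → β} {s t : Set α}
    {T : α → α} (hts : t ⊆ s) (hT : MapsTo T s t) (hF : ∀ x ∈ s, F (T x) = F x) :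
    ⨆ x ∈ s, F x = ⨆ x ∈ t, F x :=
  le_antisymm (iSup₂_le fun x hx => hF x hx ▸ le_iSup₂_of_le (T x) (hT hx) le_rfl)
    (biSup_mono hts)

lemma image_prod_snd_sub_fst {α G : Type*} [AddGroup G] (f : α → G) (s : Set α) (t : Set G) :
    (fun z : α × G => z.2 - f z.1) '' (s ×ˢ t) = t - f '' s := by
  ext v
  constructor
  · rintro ⟨⟨x, w⟩, ⟨hx, hw⟩, rfl⟩
    exact ⟨w, hw, f x, ⟨x, hx, rfl⟩, rfl⟩
  · rintro ⟨w, hw, _, ⟨x, hx, rfl⟩, rfl⟩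
    exact ⟨(x, w), ⟨hx, hw⟩, rfl⟩

section Danskin

variable {K Y : Type*} [Fintype K] [TopologicalSpace Y] {D : Set Y} {a : Y → ℝ} {g : Y → K → ℝ}

lemma Filter.Tendsto.dotProduct {ι : Type*} {l : Filter ι} {u v : ι → K → ℝ} {x y : K → ℝ}
    (hu : Tendsto u l (𝓝 x)) (hv : Tendsto v l (𝓝 y)) :
    Tendsto (fun i => u i ⬝ᵥ v i) l (𝓝 (x ⬝ᵥ y)) :=
  ((continuous_fst.dotProduct continuous_snd).tendsto (x, y)).comp (hu.prodMk_nhds hv)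

lemma ContinuousOn.dotProduct {u v : Y → K → ℝ} (hu : ContinuousOn u D) (hv : ContinuousOn v D) :
    ContinuousOn (fun y => u y ⬝ᵥ v y) D := fun y hy =>
  Filter.Tendsto.dotProduct (hu y hy) (hv y hy)

lemma exists_dotProduct_pos_of_notMem {G : Set (K → ℝ)} (hconv : Convex ℝ G)
    (hclosed : IsClosed G) (h0 : 0 ∉ G) : ∃ d : K → ℝ, ∀ x ∈ G, 0 < d ⬝ᵥ x := by
  obtain ⟨f, c, hf0, hfG⟩ := geometric_hahn_banach_point_closed hconv hclosed h0
  refine ⟨fun k => f fun j => if k = j then 1 else 0, fun x hx => ?_⟩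
  have hfx : f x = (fun k => f fun j => if k = j then 1 else 0) ⬝ᵥ x := by
    simpa [dotProduct, mul_comm] using (f : (K → ℝ) →ₗ[ℝ] ℝ).pi_apply_eq_sum_univ x
  rw [← hfx]
  exact (map_zero f ▸ hf0).trans (hfG x hx)

lemma isMaxOn_of_tendsto {ι : Type*} {l : Filter ι} [l.NeBot] (ha : ContinuousOn a D)
    (hg : ContinuousOn g D) {μ : ι → K → ℝ} {lam : K → ℝ} {z : ι → Y} {z₀ : Y}
    (hμ : Tendsto μ l (𝓝 lam)) (hz : Tendsto z l (𝓝 z₀)) (hzD : ∀ i, z i ∈ D) (hz₀ : z₀ ∈ D)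
    (hmax : ∀ i, IsMaxOn (fun y => a y + μ i ⬝ᵥ g y) D (z i)) :
    IsMaxOn (fun y => a y + lam ⬝ᵥ g y) D z₀ := by
  have hzw : Tendsto z l (𝓝[D] z₀) := tendsto_nhdsWithin_iff.2 ⟨hz, Eventually.of_forall hzD⟩
  exact isMaxOn_iff.2 fun y hy => le_of_tendsto_of_tendsto'
    (tendsto_const_nhds.add (hμ.dotProduct tendsto_const_nhds))
    (((ha z₀ hz₀).tendsto.comp hzw).add (hμ.dotProduct ((hg z₀ hz₀).tendsto.comp hzw)))
    fun i => hmax i hy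

theorem exists_isMaxOn_eq_zero_of_isLocalMin [FirstCountableTopology Y] (hD : IsCompact D)
    (hDne : D.Nonempty) (ha : ContinuousOn a D) (hg : ContinuousOn g D) {lam : K → ℝ}
    (hmin : IsLocalMin (fun μ => ⨆ z : D, a z + μ ⬝ᵥ g z) lam)
    (hconv : Convex ℝ (g '' {z | z ∈ D ∧ IsMaxOn (fun z => a z + lam ⬝ᵥ g z) D z})) :
    ∃ z ∈ D, IsMaxOn (fun z => a z + lam ⬝ᵥ g z) D z ∧ g z = 0 := by
  have hΦ : ∀ μ : K → ℝ, ContinuousOn (fun z => a z + μ ⬝ᵥ g z) D := fun μ =>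
    ha.add (continuousOn_const.dotProduct hg)
  by_contra hne
  have h0 : (0 : K → ℝ) ∉ g '' {z | z ∈ D ∧ IsMaxOn (fun z => a z + lam ⬝ᵥ g z) D z} := by
    rintro ⟨z, ⟨hzD, hzmax⟩, hz0⟩
    exact hne ⟨z, hzD, hzmax, hz0⟩
  have hclosed := ((isCompact_setOf_isMaxOn hD (hΦ lam)).image_of_continuousOn
    (hg.mono fun _ hz => hz.1)).isClosed
  obtain ⟨d, hd⟩ := exists_dotProduct_pos_of_notMem hconv hclosed h0
  obtain ⟨zl, hzlD, hzl⟩ := hD.exists_isMaxOn hDne (hΦ lam)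
  set t : ℕ → ℝ := fun n => 1 / (n + 1)
  have ht : Tendsto t atTop (𝓝 0) := tendsto_one_div_add_atTop_nhds_zero_nat
  have hμ : Tendsto (fun n => lam - t n • d) atTop (𝓝 lam) := by
    simpa using tendsto_const_nhds.sub (ht.smul_const d)
  choose z hzD hzmax using fun n => hD.exists_isMaxOn hDne (hΦ (lam - t n • d))
  -- local minimality at `lam` forces the maximizers for `lam - t • d` to have `d ⬝ᵥ g ≤ 0`
  have hdz : ∀ᶠ n in atTop, d ⬝ᵥ g (z n) ≤ 0 := by
    filter_upwards [hμ.eventually hmin] with n hn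
    rw [hzl.iSup_eq hzlD, (hzmax n).iSup_eq (hzD n)] at hn
    have hle := isMaxOn_iff.1 hzl _ (hzD n)
    simp only [sub_dotProduct, smul_dotProduct, smul_eq_mul] at hn hle
    have htn : 0 < t n := by positivity
    nlinarith
  obtain ⟨z₀, hz₀D, φ, hφ, hzφ⟩ := hD.tendsto_subseq hzD
  have hz₀max := isMaxOn_of_tendsto ha hg (hμ.comp hφ.tendsto_atTop) hzφ (fun n => hzD _) hz₀D
    fun n => hzmax _
  have hgz : Tendsto (fun n => d ⬝ᵥ g (z (φ n))) atTop (𝓝 (d ⬝ᵥ g z₀)) :=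
    Filter.Tendsto.dotProduct tendsto_const_nhds ((hg z₀ hz₀D).tendsto.comp
      (tendsto_nhdsWithin_iff.2 ⟨hzφ, Eventually.of_forall fun n => hzD _⟩))
  exact (hd _ ⟨z₀, ⟨hz₀D, hz₀max⟩, rfl⟩).not_ge
    (le_of_tendsto hgz (hφ.tendsto_atTop.eventually hdz))

end Danskin

section Coercivity

variable {K : Type*} [Fintype K]

lemma norm_le_sum_abs (w : K → ℝ) : ‖w‖ ≤ ∑ k, |w k| :=
  (pi_norm_le_iff_of_nonneg (by positivity)).2 fun k => (Real.norm_eq_abs _).trans_le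
    (Finset.single_le_sum (fun j _ => abs_nonneg (w j)) (Finset.mem_univ k))

lemma dotProduct_le_norm_mul_sum_abs (d w : K → ℝ) : d ⬝ᵥ w ≤ ‖d‖ * ∑ k, |w k| := by
  rw [Finset.mul_sum]
  refine Finset.sum_le_sum fun k _ => ?_
  calc d k * w k ≤ |d k| * |w k| := (le_abs_self _).trans (abs_mul _ _).le
    _ ≤ ‖d‖ * |w k| := by
      gcongr
      exact (Real.norm_eq_abs _).symm.trans_le (norm_le_pi_norm d k)

/-- The bound is the largest of the bounds at the `2 ^ card K` sign vectors `μ`. -/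
lemma exists_add_sum_abs_le {φ : (K → ℝ) → ℝ}
    (h : ∀ μ : K → ℝ, BddAbove (range fun w => μ ⬝ᵥ w + φ w)) :
    ∃ c, ∀ w, φ w + ∑ k, |w k| ≤ c := by
  choose c hc using fun σ : K → Bool => h fun k => if σ k then 1 else -1
  obtain ⟨C, hC⟩ := (finite_range c).bddAbove
  refine ⟨C, fun w => ?_⟩
  have hsign : (fun k => if decide (0 ≤ w k) then (1 : ℝ) else -1) ⬝ᵥ w = ∑ k, |w k| := by
    refine Finset.sum_congr rfl fun k _ => ?_
    by_cases hk : 0 ≤ w k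
    · simp [hk, abs_of_nonneg hk]
    · simp [hk, abs_of_neg (not_le.1 hk)]
  calc φ w + ∑ k, |w k| = _ := by rw [← hsign, add_comm]
    _ ≤ c _ := hc _ (mem_range_self w)
    _ ≤ C := hC (mem_range_self _)

lemma le_of_forall_add_sum_abs_le {u : (K → ℝ) → ℝ} {lam : K → ℝ} {c : ℝ}
    (hc : ∀ w, lam ⬝ᵥ w + u w + ∑ k, |w k| ≤ c) : u 0 ≤ c := by
  simpa using hc 0

lemma isMaxOn_univ_of_isMaxOn_closedBall {u : (K → ℝ) → ℝ} {lam μ : K → ℝ} {c : ℝ}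
    (hc : ∀ w, lam ⬝ᵥ w + u w + ∑ k, |w k| ≤ c) (hμ : μ ∈ closedBall lam (1 / 2)) {w : K → ℝ}
    (hw : IsMaxOn (fun w => μ ⬝ᵥ w + u w) (closedBall 0 (2 * (c - u 0))) w) :
    IsMaxOn (fun w => μ ⬝ᵥ w + u w) univ w := by
  refine isMaxOn_univ_of_isMaxOn (mem_closedBall_self ?_) (fun w' hw' => ?_) hw
  · linarith [le_of_forall_add_sum_abs_le hc]
  have hd := dotProduct_le_norm_mul_sum_abs (μ - lam) w'
  rw [sub_dotProduct] at hd
  have hμ' : ‖μ - lam‖ ≤ 1 / 2 := by rwa [← dist_eq_norm]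
  have hw' : 2 * (c - u 0) < ‖w'‖ := by simpa using hw'
  have : ‖μ - lam‖ * ∑ k, |w' k| ≤ 1 / 2 * ∑ k, |w' k| := by gcongr
  simp only [dotProduct_zero, zero_add]
  linarith [hc w', norm_le_sum_abs w']

end Coercivity

section Duality

variable {K Y : Type*} [Fintype K] {C : Set Y} {a : Y → ℝ} {vv : Y → K → ℝ} {u : (K → ℝ) → ℝ}

/-- The Lagrangian of maximizing `a y + u w` over `y ∈ C` subject to `w = vv y`. -/
def lagrangian (a : Y → ℝ) (vv : Y → K → ℝ) (u : (K → ℝ) → ℝ) (μ : K → ℝ)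
    (z : Y × (K → ℝ)) : ℝ :=
  a z.1 + u z.2 + μ ⬝ᵥ (z.2 - vv z.1)

/-- The dual function of the same problem, with the supremum of its Lagrangian split into the
independent maximizations over `y` and over `w`. -/
noncomputable def dualFunction (C : Set Y) (a : Y → ℝ) (vv : Y → K → ℝ) (u : (K → ℝ) → ℝ)
    (μ : K → ℝ) : EReal :=
  (⨆ y ∈ C, ((a y - μ ⬝ᵥ vv y : ℝ) : EReal)) + ⨆ w, ((μ ⬝ᵥ w + u w : ℝ) : EReal)

lemma lagrangian_eq (μ : K → ℝ) :
    lagrangian a vv u μ = fun z => (a z.1 - μ ⬝ᵥ vv z.1) + (μ ⬝ᵥ z.2 + u z.2) := by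
  funext z
  rw [lagrangian, dotProduct_sub]
  ring

lemma isMaxOn_lagrangian_iff {B : Set (K → ℝ)} {μ : K → ℝ} {y : Y} {w : K → ℝ} (hy : y ∈ C)
    (hw : w ∈ B) :
    IsMaxOn (lagrangian a vv u μ) (C ×ˢ B) (y, w) ↔
      IsMaxOn (fun y => a y - μ ⬝ᵥ vv y) C y ∧ IsMaxOn (fun w => μ ⬝ᵥ w + u w) B w := by
  rw [lagrangian_eq]
  exact isMaxOn_prod_add_iff (f := fun y => a y - μ ⬝ᵥ vv y) (g := fun w => μ ⬝ᵥ w + u w) hy hw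

lemma setOf_isMaxOn_lagrangian (B : Set (K → ℝ)) (μ : K → ℝ) :
    {z | z ∈ C ×ˢ B ∧ IsMaxOn (lagrangian a vv u μ) (C ×ˢ B) z} =
      {y | y ∈ C ∧ IsMaxOn (fun y => a y - μ ⬝ᵥ vv y) C y} ×ˢ
        {w | w ∈ B ∧ IsMaxOn (fun w => μ ⬝ᵥ w + u w) B w} := by
  rw [lagrangian_eq]
  exact setOf_isMaxOn_prod_add (f := fun y => a y - μ ⬝ᵥ vv y) (g := fun w => μ ⬝ᵥ w + u w)

lemma dualFunction_eq_of_isMaxOn {μ : K → ℝ} {y : Y} {w : K → ℝ} (hy : y ∈ C)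
    (hymax : IsMaxOn (fun y => a y - μ ⬝ᵥ vv y) C y)
    (hwmax : IsMaxOn (fun w => μ ⬝ᵥ w + u w) univ w) :
    dualFunction C a vv u μ = lagrangian a vv u μ (y, w) := by
  rw [dualFunction, EReal.biSup_coe_eq_of_isMaxOn hy hymax, EReal.iSup_coe_eq_of_isMaxOn hwmax,
    ← EReal.coe_add, lagrangian_eq]

lemma dualFunction_eq_iSup_lagrangian [TopologicalSpace Y] {B : Set (K → ℝ)} {μ : K → ℝ}
    (hC : IsCompact C) (hCne : C.Nonempty) (hB : IsCompact B) (hBne : B.Nonempty)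
    (hcont : ContinuousOn (lagrangian a vv u μ) (C ×ˢ B))
    (hBmax : ∀ w, IsMaxOn (fun w => μ ⬝ᵥ w + u w) B w →
      IsMaxOn (fun w => μ ⬝ᵥ w + u w) univ w) :
    dualFunction C a vv u μ = ((⨆ z : C ×ˢ B, lagrangian a vv u μ z : ℝ) : EReal) := by
  obtain ⟨⟨y, w⟩, ⟨hy, hw⟩, hmax⟩ := (hC.prod hB).exists_isMaxOn (hCne.prod hBne) hcont
  rw [hmax.iSup_eq (mk_mem_prod hy hw)]
  obtain ⟨hymax, hwmax⟩ := (isMaxOn_lagrangian_iff hy hw).1 hmax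
  exact dualFunction_eq_of_isMaxOn hy hymax (hBmax w hwmax)

lemma concaveOn_dotProduct_add (hu : ConcaveOn ℝ univ u) (μ : K → ℝ) {s : Set (K → ℝ)}
    (hs : Convex ℝ s) : ConcaveOn ℝ s fun w => μ ⬝ᵥ w + u w :=
  ((IsLinearMap.mk' _ ⟨dotProduct_add μ, fun c w => dotProduct_smul c μ w⟩ :
    (K → ℝ) →ₗ[ℝ] ℝ).concaveOn hs).add (hu.subset (subset_univ s) hs)

theorem exists_isMaxOn_dualFunction_eq_of_isLocalMin [TopologicalSpace Y]
    [FirstCountableTopology Y] (hC : IsCompact C) (hCne : C.Nonempty) (ha : ContinuousOn a C)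
    (hvv : ContinuousOn vv C) (hu : ConcaveOn ℝ univ u)
    (hbdd : ∀ μ, BddAbove (range fun w => μ ⬝ᵥ w + u w)) {lam : K → ℝ}
    (hmin : IsLocalMin (dualFunction C a vv u) lam)
    (hconv : Convex ℝ (vv '' {y | y ∈ C ∧ IsMaxOn (fun y => a y - lam ⬝ᵥ vv y) C y})) :
    ∃ y ∈ C, IsMaxOn (fun y => a y - lam ⬝ᵥ vv y) C y ∧
      dualFunction C a vv u lam = ((a y + u (vv y) : ℝ) : EReal) := by
  have hucont : Continuous u := continuousOn_univ.1 (hu.continuousOn isOpen_univ)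
  obtain ⟨c, hc⟩ := exists_add_sum_abs_le (φ := fun w => lam ⬝ᵥ w + u w) fun μ => by
    simpa [add_dotProduct, add_assoc] using hbdd (μ + lam)
  set B := closedBall (0 : K → ℝ) (2 * (c - u 0))
  have hBne : B.Nonempty := nonempty_closedBall.2 (by linarith [le_of_forall_add_sum_abs_le hc])
  have ha' : ContinuousOn (fun z : Y × (K → ℝ) => a z.1 + u z.2) (C ×ˢ B) :=
    (ha.comp continuousOn_fst fun _ hz => hz.1).add (hucont.comp_continuousOn continuousOn_snd)
  have hg' : ContinuousOn (fun z : Y × (K → ℝ) => z.2 - vv z.1) (C ×ˢ B) :=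
    continuousOn_snd.sub (hvv.comp continuousOn_fst fun _ hz => hz.1)
  have hval : ∀ μ ∈ closedBall lam (1 / 2),
      dualFunction C a vv u μ = ((⨆ z : C ×ˢ B, lagrangian a vv u μ z : ℝ) : EReal) :=
    fun μ hμ => dualFunction_eq_iSup_lagrangian hC hCne (isCompact_closedBall _ _) hBne
      (ha'.add (continuousOn_const.dotProduct hg'))
      fun _ => isMaxOn_univ_of_isMaxOn_closedBall hc hμ
  have hlam : lam ∈ closedBall lam (1 / 2) := mem_closedBall_self (by norm_num)
  have hmin' : IsLocalMin (fun μ => ⨆ z : C ×ˢ B, lagrangian a vv u μ z) lam := by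
    filter_upwards [hmin, closedBall_mem_nhds lam (by norm_num : (0 : ℝ) < 1 / 2)] with μ hμ hμB
    rwa [hval lam hlam, hval μ hμB, EReal.coe_le_coe_iff] at hμ
  have hconv' : Convex ℝ ((fun z : Y × (K → ℝ) => z.2 - vv z.1) ''
      {z | z ∈ C ×ˢ B ∧ IsMaxOn (lagrangian a vv u lam) (C ×ˢ B) z}) := by
    rw [setOf_isMaxOn_lagrangian, image_prod_snd_sub_fst]
    exact (convex_setOf_isMaxOn (concaveOn_dotProduct_add hu lam (convex_closedBall _ _))).sub hconv
  obtain ⟨⟨y, w⟩, ⟨hy, hw⟩, hmax, hzero⟩ := exists_isMaxOn_eq_zero_of_isLocalMin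
    (hC.prod (isCompact_closedBall _ _)) (hCne.prod hBne) ha' hg' hmin' hconv'
  obtain ⟨hymax, hwmax⟩ := (isMaxOn_lagrangian_iff hy hw).1 hmax
  obtain rfl : w = vv y := sub_eq_zero.1 hzero
  refine ⟨y, hy, hymax, ?_⟩
  rw [dualFunction_eq_of_isMaxOn hy hymax (isMaxOn_univ_of_isMaxOn_closedBall hc hlam hwmax),
    lagrangian, sub_self, dotProduct_zero, add_zero]

end Duality

lemma Finset.sum_sub_sum_eq_of_forall_ne {α : Type*} [DecidableEq α] {s : Finset α} {a : α}
    (ha : a ∈ s) {f g : α → ℝ} (hfg : ∀ x ∈ s, x ≠ a → f x = g x) :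
    ∑ x ∈ s, f x - ∑ x ∈ s, g x = f a - g a := by
  rw [← Finset.add_sum_erase s f ha, ← Finset.add_sum_erase s g ha,
    Finset.sum_congr rfl fun x hx => hfg x (Finset.mem_of_mem_erase hx) (Finset.ne_of_mem_erase hx)]
  ring

section EdgeSum

variable {I K : Type*}

lemma continuous_fst_apply_apply (i : I) (k : K) :
    Continuous fun y : (I → K → ℝ) × (I → K → ℝ) => y.1 i k :=
  (continuous_apply k).comp ((continuous_apply i).comp continuous_fst)

def edgeSum (E : Finset (I × K)) (c : I × K → ℝ → ℝ) (x b : I → K → ℝ) : ℝ :=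
  ∑ e ∈ E, x e.1 e.2 * c e (b e.1 e.2)

variable {E : Finset (I × K)}

lemma isLinearMap_edgeSum (c : I × K → ℝ → ℝ) (b : I → K → ℝ) :
    IsLinearMap ℝ fun x => edgeSum E c x b :=
  ⟨fun x y => by simp only [edgeSum, Pi.add_apply, add_mul, Finset.sum_add_distrib],
    fun t x => by simp only [edgeSum, Pi.smul_apply, smul_eq_mul, Finset.mul_sum, mul_assoc]⟩

lemma edgeSum_congr_bids {c : I × K → ℝ → ℝ} {x b b' : I → K → ℝ}
    (h : ∀ e ∈ E, x e.1 e.2 ≠ 0 → b e.1 e.2 = b' e.1 e.2) : edgeSum E c x b = edgeSum E c x b' :=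
  Finset.sum_congr rfl fun e he => by
    by_cases hx : x e.1 e.2 = 0
    · simp [hx]
    · rw [h e he hx]

end EdgeSum

section Auction

variable {I K : Type*} [DecidableEq I] [DecidableEq K] (E : Finset (I × K))

def feasibleSet [Fintype K] (bbar : I → ℝ) : Set ((I → K → ℝ) × (I → K → ℝ)) :=
  {xb | (∀ i k, 0 ≤ xb.1 i k) ∧
      (∀ i, (∑ k ∈ Finset.univ.filter (fun k => (i, k) ∈ E), xb.1 i k) ≤ 1) ∧
      (∀ i k, (i, k) ∈ E → xb.2 i k ∈ Set.Icc (0:ℝ) (bbar i))}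

-- `edgeAllocations E ×ˢ edgeBids E bbar` is `feasibleSet E bbar` with the coordinates off `E`
-- forced to `0`; unlike `feasibleSet E bbar` it is compact.
def edgeAllocations [Fintype K] : Set (I → K → ℝ) :=
  {x | (∀ i k, 0 ≤ x i k) ∧ (∀ i, ∑ k ∈ Finset.univ.filter (fun k => (i, k) ∈ E), x i k ≤ 1) ∧
    ∀ i k, (i, k) ∉ E → x i k = 0}

def edgeBids (bbar : I → ℝ) : Set (I → K → ℝ) :=
  univ.pi fun i => univ.pi fun k => if (i, k) ∈ E then Icc 0 (bbar i) else {0}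

def restrictEdges (f : I → K → ℝ) : I → K → ℝ := fun i k => if (i, k) ∈ E then f i k else 0

def expectedSurplus (ρ β : I → ℝ → ℝ) (i : I) (z b : ℝ) : ℝ := (z - β i b) * ρ i b

def edgePayoff (ρ β : I → ℝ → ℝ) (r : I → K → ℝ) (s : I → ℝ) (lam : K → ℝ) (e : I × K)
    (t : ℝ) : ℝ :=
  s e.1 * expectedSurplus ρ β e.1 (r e.1 e.2 * (1 - lam e.2)) t

def profit (h : I → ℝ → ℝ → ℝ) (r : I → K → ℝ) (s : I → ℝ) (x b : I → K → ℝ) : ℝ :=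
  ∑ e ∈ E, h e.1 (r e.1 e.2) (b e.1 e.2) * s e.1 * x e.1 e.2

def campaignValue [Fintype I] (ρ : I → ℝ → ℝ) (r : I → K → ℝ) (s : I → ℝ) (x b : I → K → ℝ)
    (k : K) : ℝ :=
  ∑ i ∈ Finset.univ.filter (fun i => (i, k) ∈ E), r i k * s i * x i k * ρ i (b i k)

variable {E}

lemma mem_edgeBids {bbar : I → ℝ} {b : I → K → ℝ} :
    b ∈ edgeBids E bbar ↔ ∀ i k, b i k ∈ (if (i, k) ∈ E then Icc 0 (bbar i) else {0}) := by
  simp [edgeBids]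

lemma isCompact_edgeBids (bbar : I → ℝ) : IsCompact (edgeBids E bbar) :=
  isCompact_univ_pi fun i => isCompact_univ_pi fun k => by
    split_ifs
    exacts [isCompact_Icc, isCompact_singleton]

lemma le_one_of_mem_edgeAllocations [Fintype K] {x : I → K → ℝ} (hx : x ∈ edgeAllocations E)
    (i : I) (k : K) : x i k ≤ 1 := by
  by_cases he : (i, k) ∈ E
  · exact (Finset.single_le_sum (fun k' _ => hx.1 i k') (by simpa using he)).trans (hx.2.1 i)
  · simp [hx.2.2 i k he]

lemma isCompact_edgeAllocations [Fintype K] : IsCompact (edgeAllocations E : Set (I → K → ℝ)) := by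
  have hbox : IsCompact (univ.pi fun _ : I => univ.pi fun _ : K => Icc (0 : ℝ) 1) :=
    isCompact_univ_pi fun _ => isCompact_univ_pi fun _ => isCompact_Icc
  refine hbox.of_isClosed_subset ?_ fun x hx i _ k _ =>
    ⟨hx.1 i k, le_one_of_mem_edgeAllocations hx i k⟩
  have hcoord : ∀ i k, Continuous fun x : I → K → ℝ => x i k := fun i k =>
    (continuous_apply k).comp (continuous_apply i)
  simp only [edgeAllocations, ofPred_and, ofPred_forall]
  refine (isClosed_iInter fun i => isClosed_iInter fun k =>
    isClosed_le continuous_const (hcoord i k)).inter (IsClosed.inter ?_ ?_)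
  · exact isClosed_iInter fun i =>
      isClosed_le (continuous_finsetSum _ fun k _ => hcoord i k) continuous_const
  · exact isClosed_iInter fun i => isClosed_iInter fun k => isClosed_iInter fun _ =>
      isClosed_eq (hcoord i k) continuous_const

lemma convex_edgeAllocations [Fintype K] : Convex ℝ (edgeAllocations E : Set (I → K → ℝ)) := by
  rintro x ⟨hx0, hx1, hxE⟩ y ⟨hy0, hy1, hyE⟩ θ τ hθ hτ hθτ
  refine ⟨fun i k => add_nonneg (mul_nonneg hθ (hx0 i k)) (mul_nonneg hτ (hy0 i k)), fun i => ?_,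
    fun i k he => by simp [hxE i k he, hyE i k he]⟩
  simp only [Pi.add_apply, Pi.smul_apply, smul_eq_mul, Finset.sum_add_distrib, ← Finset.mul_sum]
  nlinarith [hx1 i, hy1 i]

lemma zero_mem_edgeAllocations [Fintype K] : (0 : I → K → ℝ) ∈ edgeAllocations E :=
  ⟨fun _ _ => le_rfl, fun _ => by simp, fun _ _ _ => rfl⟩

lemma zero_mem_edgeBids {bbar : I → ℝ} (hbbar : ∀ i, 0 ≤ bbar i) :
    (0 : I → K → ℝ) ∈ edgeBids E bbar :=
  mem_edgeBids.2 fun i k => by split_ifs <;> simp [hbbar i]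

lemma prod_subset_feasibleSet [Fintype K] (bbar : I → ℝ) :
    edgeAllocations E ×ˢ edgeBids E bbar ⊆ feasibleSet E bbar := by
  rintro ⟨x, b⟩ ⟨⟨hx0, hx1, -⟩, hb⟩
  refine ⟨hx0, hx1, fun i k he => ?_⟩
  simpa [he] using mem_edgeBids.1 hb i k

lemma mapsTo_restrictEdges [Fintype K] (bbar : I → ℝ) :
    MapsTo (fun y => (restrictEdges E y.1, restrictEdges E y.2)) (feasibleSet E bbar)
      (edgeAllocations E ×ˢ edgeBids E bbar) := by
  rintro ⟨x, b⟩ ⟨hx0, hx1, hb⟩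
  refine ⟨⟨fun i k => ?_, fun i => ?_, fun i k he => if_neg he⟩, mem_edgeBids.2 fun i k => ?_⟩
  · by_cases he : (i, k) ∈ E <;> simp [restrictEdges, he, hx0 i k]
  · refine le_of_eq_of_le (Finset.sum_congr rfl fun k hk => ?_) (hx1 i)
    exact if_pos (Finset.mem_filter.1 hk).2
  · by_cases he : (i, k) ∈ E
    · simpa [restrictEdges, he] using hb i k he
    · simp [restrictEdges, he]

lemma profit_restrictEdges (h : I → ℝ → ℝ → ℝ) (r : I → K → ℝ) (s : I → ℝ) (x b : I → K → ℝ) :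
    profit E h r s (restrictEdges E x) (restrictEdges E b) = profit E h r s x b :=
  Finset.sum_congr rfl fun e he => by simp [restrictEdges, he]

lemma campaignValue_restrictEdges [Fintype I] (ρ : I → ℝ → ℝ) (r : I → K → ℝ) (s : I → ℝ)
    (x b : I → K → ℝ) :
    campaignValue E ρ r s (restrictEdges E x) (restrictEdges E b) = campaignValue E ρ r s x b :=
  funext fun k => Finset.sum_congr rfl fun i hi => by
    simp [restrictEdges, (Finset.mem_filter.1 hi).2]

lemma continuousOn_comp_bid [Fintype K] {bbar : I → ℝ} {f : ℝ → ℝ} {i : I} {k : K}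
    (hf : ContinuousOn f (Icc 0 (bbar i))) (he : (i, k) ∈ E) :
    ContinuousOn (fun y : (I → K → ℝ) × (I → K → ℝ) => f (y.2 i k))
      (edgeAllocations E ×ˢ edgeBids E bbar) :=
  hf.comp ((continuous_apply k).comp ((continuous_apply i).comp continuous_snd)).continuousOn
    fun _ hy => by simpa [he] using mem_edgeBids.1 hy.2 i k

lemma continuousOn_profit [Fintype K] {bbar : I → ℝ} {ρ β : I → ℝ → ℝ}
    (hρ : ∀ i, ContinuousOn (ρ i) (Icc 0 (bbar i))) (hβ : ∀ i, ContinuousOn (β i) (Icc 0 (bbar i)))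
    (r : I → K → ℝ) (s : I → ℝ) :
    ContinuousOn (fun y => profit E (expectedSurplus ρ β) r s y.1 y.2)
      (edgeAllocations E ×ˢ edgeBids E bbar) :=
  continuousOn_finsetSum _ fun e he =>
    (((continuousOn_const.sub (continuousOn_comp_bid (hβ e.1) he)).mul
      (continuousOn_comp_bid (hρ e.1) he)).mul continuousOn_const).mul
      (continuous_fst_apply_apply e.1 e.2).continuousOn

lemma continuousOn_campaignValue [Fintype I] [Fintype K] {bbar : I → ℝ} {ρ : I → ℝ → ℝ}
    (hρ : ∀ i, ContinuousOn (ρ i) (Icc 0 (bbar i))) (r : I → K → ℝ) (s : I → ℝ) :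
    ContinuousOn (fun y => campaignValue E ρ r s y.1 y.2) (edgeAllocations E ×ˢ edgeBids E bbar) :=
  continuousOn_pi.2 fun k => continuousOn_finsetSum _ fun i hi =>
    (continuousOn_const.mul (continuous_fst_apply_apply i k).continuousOn).mul
      (continuousOn_comp_bid (hρ i) (Finset.mem_filter.1 hi).2)

lemma sum_sum_filter_mem [Fintype I] [Fintype K] (f : I → K → ℝ) :
    ∑ k, ∑ i ∈ Finset.univ.filter (fun i => (i, k) ∈ E), f i k = ∑ e ∈ E, f e.1 e.2 := by
  simp only [Finset.sum_filter]
  rw [Finset.sum_comm, ← Fintype.sum_prod_type' (fun i k => if (i, k) ∈ E then f i k else 0)]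
  exact (Finset.sum_ite_mem _ _ _).trans (by rw [Finset.univ_inter])

lemma profit_sub_dotProduct_campaignValue [Fintype I] [Fintype K] (ρ β : I → ℝ → ℝ)
    (r : I → K → ℝ) (s : I → ℝ) (lam : K → ℝ) (x b : I → K → ℝ) :
    profit E (expectedSurplus ρ β) r s x b - lam ⬝ᵥ campaignValue E ρ r s x b =
      edgeSum E (edgePayoff ρ β r s lam) x b := by
  simp only [dotProduct, campaignValue, Finset.mul_sum]
  rw [sum_sum_filter_mem (fun i k => lam k * (r i k * s i * x i k * ρ i (b i k))), profit, edgeSum,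
    ← Finset.sum_sub_distrib]
  exact Finset.sum_congr rfl fun e _ => by simp only [edgePayoff, expectedSurplus]; ring

lemma isLinearMap_campaignValue [Fintype I] (ρ : I → ℝ → ℝ) (r : I → K → ℝ) (s : I → ℝ)
    (b : I → K → ℝ) : IsLinearMap ℝ fun x => campaignValue E ρ r s x b :=
  ⟨fun x y => funext fun k => by
      simp only [campaignValue, Pi.add_apply, mul_add, add_mul, Finset.sum_add_distrib],
    fun t x => funext fun k => by
      simp only [campaignValue, Pi.smul_apply, smul_eq_mul, Finset.mul_sum]
      exact Finset.sum_congr rfl fun _ _ => by ring⟩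

lemma campaignValue_congr_bids [Fintype I] {ρ : I → ℝ → ℝ} {r : I → K → ℝ} {s : I → ℝ}
    {x b b' : I → K → ℝ} (h : ∀ e ∈ E, x e.1 e.2 ≠ 0 → b e.1 e.2 = b' e.1 e.2) :
    campaignValue E ρ r s x b = campaignValue E ρ r s x b' :=
  funext fun k => Finset.sum_congr rfl fun i hi => by
    by_cases hx : x i k = 0
    · simp [hx]
    · rw [h (i, k) (Finset.mem_filter.1 hi).2 hx]

section Maximizers

variable [Fintype K] {bbar : I → ℝ} {c : I × K → ℝ → ℝ} {x b : I → K → ℝ} {i : I} {k : K}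

lemma isMaxOn_bid_of_isMaxOn_edgeSum (hy : (x, b) ∈ edgeAllocations E ×ˢ edgeBids E bbar)
    (hmax : IsMaxOn (fun y => edgeSum E c y.1 y.2) (edgeAllocations E ×ˢ edgeBids E bbar) (x, b))
    (he : (i, k) ∈ E) (hx : 0 < x i k) : IsMaxOn (c (i, k)) (Icc 0 (bbar i)) (b i k) := by
  refine isMaxOn_iff.2 fun t ht => ?_
  set b' : I → K → ℝ := fun i' k' => if i' = i ∧ k' = k then t else b i' k'
  have hb' : b' ∈ edgeBids E bbar := mem_edgeBids.2 fun i' k' => by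
    by_cases h : i' = i ∧ k' = k
    · obtain ⟨rfl, rfl⟩ := h
      simpa [b', he] using ht
    · simpa only [b', if_neg h] using mem_edgeBids.1 hy.2 i' k'
  have hle : edgeSum E c x b' ≤ edgeSum E c x b := isMaxOn_iff.1 hmax (x, b') ⟨hy.1, hb'⟩
  have hdiff := Finset.sum_sub_sum_eq_of_forall_ne he
    (f := fun e => x e.1 e.2 * c e (b' e.1 e.2)) (g := fun e => x e.1 e.2 * c e (b e.1 e.2))
    fun e _ hne => by simp only [b', if_neg fun h : e.1 = i ∧ e.2 = k => hne (Prod.ext h.1 h.2)]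
  simp only [b', and_self, if_true] at hdiff
  unfold edgeSum at hle
  nlinarith

lemma mul_nonneg_of_isMaxOn_edgeSum (hy : (x, b) ∈ edgeAllocations E ×ˢ edgeBids E bbar)
    (hmax : IsMaxOn (fun y => edgeSum E c y.1 y.2) (edgeAllocations E ×ˢ edgeBids E bbar) (x, b))
    (he : (i, k) ∈ E) : 0 ≤ x i k * c (i, k) (b i k) := by
  obtain ⟨⟨hx0, hx1, hxE⟩, hb⟩ := hy
  set x' : I → K → ℝ := fun i' k' => if i' = i ∧ k' = k then 0 else x i' k'
  have hx'0 : ∀ i' k', 0 ≤ x' i' k' := fun i' k' => by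
    by_cases h : i' = i ∧ k' = k
    · simp only [x', if_pos h, le_rfl]
    · simpa only [x', if_neg h] using hx0 i' k'
  have hx'x : ∀ i' k', x' i' k' ≤ x i' k' := fun i' k' => by
    by_cases h : i' = i ∧ k' = k
    · simpa only [x', if_pos h] using hx0 i' k'
    · simp only [x', if_neg h, le_rfl]
  have hx' : x' ∈ edgeAllocations E :=
    ⟨hx'0, fun i' => (Finset.sum_le_sum fun k' _ => hx'x i' k').trans (hx1 i'),
      fun i' k' he' => le_antisymm ((hx'x i' k').trans_eq (hxE i' k' he')) (hx'0 i' k')⟩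
  have hle : edgeSum E c x' b ≤ edgeSum E c x b := isMaxOn_iff.1 hmax (x', b) ⟨hx', hb⟩
  have hdiff := Finset.sum_sub_sum_eq_of_forall_ne he
    (f := fun e => x e.1 e.2 * c e (b e.1 e.2)) (g := fun e => x' e.1 e.2 * c e (b e.1 e.2))
    fun e _ hne => by simp only [x', if_neg fun h : e.1 = i ∧ e.2 = k => hne (Prod.ext h.1 h.2)]
  simp only [x', and_self, if_true, zero_mul, sub_zero] at hdiff
  unfold edgeSum at hle
  linarith

lemma convex_campaignValue_image_of_forall_eq [Fintype I] {ρ : I → ℝ → ℝ} {r : I → K → ℝ}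
    {s : I → ℝ} {B : I → K → ℝ} (hB : B ∈ edgeBids E bbar)
    (hbids : ∀ x b, (x, b) ∈ edgeAllocations E ×ˢ edgeBids E bbar →
      IsMaxOn (fun y => edgeSum E c y.1 y.2) (edgeAllocations E ×ˢ edgeBids E bbar) (x, b) →
      ∀ i k, (i, k) ∈ E → 0 < x i k → b i k = B i k) :
    Convex ℝ ((fun y => campaignValue E ρ r s y.1 y.2) ''
      {y | y ∈ edgeAllocations E ×ˢ edgeBids E bbar ∧
        IsMaxOn (fun y => edgeSum E c y.1 y.2) (edgeAllocations E ×ˢ edgeBids E bbar) y}) := by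
  set S₀ := edgeAllocations E ×ˢ edgeBids E bbar
  set M := {y | y ∈ S₀ ∧ IsMaxOn (fun y => edgeSum E c y.1 y.2) S₀ y}
  have hcongr : ∀ y ∈ M, ∀ e ∈ E, y.1 e.1 e.2 ≠ 0 → y.2 e.1 e.2 = B e.1 e.2 :=
    fun y hy e he hne => hbids y.1 y.2 hy.1 hy.2 e.1 e.2 he
      (lt_of_le_of_ne (hy.1.1.1 e.1 e.2) (Ne.symm hne))
  have hBM : ∀ y ∈ M, (y.1, B) ∈ M := fun y hy =>
    ⟨⟨hy.1.1, hB⟩, isMaxOn_iff.2 fun z hz => (hy.2 hz).trans_eq (edgeSum_congr_bids (hcongr y hy))⟩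
  have himage : (fun y => campaignValue E ρ r s y.1 y.2) '' M =
      (fun x => campaignValue E ρ r s x B) '' {x | (x, B) ∈ M} := by
    ext v
    constructor
    · rintro ⟨y, hy, rfl⟩
      exact ⟨y.1, hBM y hy, (campaignValue_congr_bids (hcongr y hy)).symm⟩
    · rintro ⟨x, hx, rfl⟩
      exact ⟨(x, B), hx, rfl⟩
  rw [himage]
  refine Convex.is_linear_image ?_ (isLinearMap_campaignValue ρ r s B)
  rcases eq_empty_or_nonempty M with hM | ⟨y₀, hy₀⟩
  · simp [hM, convex_empty]
  have hslice : {x | (x, B) ∈ M} =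
      {x | x ∈ edgeAllocations E ∧ edgeSum E c y₀.1 y₀.2 ≤ edgeSum E c x B} := by
    ext x
    simp only [M, setOf_isMaxOn_eq hy₀.1 hy₀.2]
    exact ⟨fun ⟨hx, hle⟩ => ⟨hx.1, hle⟩, fun ⟨hx, hle⟩ => ⟨⟨hx, hB⟩, hle⟩⟩
  rw [hslice]
  exact ((IsLinearMap.mk' _ (isLinearMap_edgeSum c B)).concaveOn convex_edgeAllocations).convex_ge _

end Maximizers

lemma exists_bid_eq_of_isMaxOn [Fintype K] {ρ β : I → ℝ → ℝ} {r : I → K → ℝ} {s : I → ℝ}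
    {lam : K → ℝ} {bbar : I → ℝ} {i : I} {k : K} (hbbar : 0 ≤ bbar i) (hs : 0 < s i)
    (hr : 0 < r i k) (hρ : ∀ b ∈ Icc 0 (bbar i), 0 ≤ ρ i b)
    (hβρ : ∀ b ∈ Ioc 0 (bbar i), 0 < β i b * ρ i b) (he : (i, k) ∈ E)
    (hUS : lam k < 1 → ∃! b₀, b₀ ∈ Icc 0 (bbar i) ∧ ∀ b ∈ Icc 0 (bbar i),
      expectedSurplus ρ β i (r i k * (1 - lam k)) b ≤
        expectedSurplus ρ β i (r i k * (1 - lam k)) b₀) :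
    ∃ t ∈ Icc 0 (bbar i), ∀ x b, (x, b) ∈ edgeAllocations E ×ˢ edgeBids E bbar →
      IsMaxOn (fun y => edgeSum E (edgePayoff ρ β r s lam) y.1 y.2)
        (edgeAllocations E ×ˢ edgeBids E bbar) (x, b) → 0 < x i k → b i k = t := by
  by_cases hlam : lam k < 1
  · obtain ⟨t, ⟨ht, -⟩, huniq⟩ := hUS hlam
    refine ⟨t, ht, fun x b hy hmax hx => huniq _ ⟨by simpa [he] using mem_edgeBids.1 hy.2 i k,
      fun b' hb' => ?_⟩⟩
    exact le_of_mul_le_mul_left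
      (isMaxOn_iff.1 (isMaxOn_bid_of_isMaxOn_edgeSum hy hmax he hx) b' hb') hs
  -- for `lam k ≥ 1` every positive bid has negative surplus, so a maximizer bids `0`
  refine ⟨0, ⟨le_rfl, hbbar⟩, fun x b hy hmax hx => ?_⟩
  have hb : b i k ∈ Icc 0 (bbar i) := by simpa [he] using mem_edgeBids.1 hy.2 i k
  have hnn := mul_nonneg_of_isMaxOn_edgeSum hy hmax he
  by_contra hne
  have hβρpos := hβρ (b i k) ⟨lt_of_le_of_ne hb.1 (Ne.symm hne), hb.2⟩
  have hrl : r i k * (1 - lam k) ≤ 0 :=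
    mul_nonpos_of_nonneg_of_nonpos hr.le (by linarith [not_lt.1 hlam])
  have hneg : expectedSurplus ρ β i (r i k * (1 - lam k)) (b i k) < 0 := by
    unfold expectedSurplus
    nlinarith [mul_nonpos_of_nonpos_of_nonneg hrl (hρ _ hb)]
  unfold edgePayoff at hnn
  nlinarith [mul_pos hx hs]

lemma convex_campaignValue_image_setOf_isMaxOn [Fintype I] [Fintype K] {ρ β : I → ℝ → ℝ}
    {r : I → K → ℝ} {s : I → ℝ} {lam : K → ℝ} {bbar : I → ℝ} (hbbar : ∀ i, 0 ≤ bbar i)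
    (hs : ∀ i, 0 < s i) (hr : ∀ i k, (i, k) ∈ E → 0 < r i k)
    (hρ : ∀ i, ∀ b ∈ Icc 0 (bbar i), 0 ≤ ρ i b)
    (hβρ : ∀ i, ∀ b ∈ Ioc 0 (bbar i), 0 < β i b * ρ i b)
    (hUS : ∀ i k, (i, k) ∈ E → lam k < 1 →
      ∃! b₀, b₀ ∈ Icc 0 (bbar i) ∧ ∀ b ∈ Icc 0 (bbar i),
        expectedSurplus ρ β i (r i k * (1 - lam k)) b ≤
          expectedSurplus ρ β i (r i k * (1 - lam k)) b₀) :
    Convex ℝ ((fun y => campaignValue E ρ r s y.1 y.2) ''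
      {y | y ∈ edgeAllocations E ×ˢ edgeBids E bbar ∧
        IsMaxOn (fun y => profit E (expectedSurplus ρ β) r s y.1 y.2 -
          lam ⬝ᵥ campaignValue E ρ r s y.1 y.2) (edgeAllocations E ×ˢ edgeBids E bbar) y}) := by
  simp only [profit_sub_dotProduct_campaignValue]
  choose! B hB hBeq using fun i k (he : (i, k) ∈ E) =>
    exists_bid_eq_of_isMaxOn (hbbar i) (hs i) (hr i k he) (hρ i) (hβρ i) he (hUS i k he)
  refine convex_campaignValue_image_of_forall_eq (B := restrictEdges E B)
    (mem_edgeBids.2 fun i k => ?_) fun x b hy hmax i k he hx => ?_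
  · by_cases he : (i, k) ∈ E
    · simpa [restrictEdges, he] using hB i k he
    · simp [restrictEdges, he]
  · simpa [restrictEdges, he] using hBeq i k he x b hy hmax hx

end Auction

theorem stmt_7_general
    {I K : Type*} [Fintype I] [Fintype K] [DecidableEq I] [DecidableEq K]
    (E : Finset (I × K))
    (bbar : I → ℝ) (hbbar : ∀ i, 0 < bbar i)
    (ρ β : I → ℝ → ℝ)
    (hρ01 : ∀ i, ∀ b ∈ Set.Icc (0:ℝ) (bbar i), ρ i b ∈ Set.Icc (0:ℝ) 1)
    (s : I → ℝ) (hs : ∀ i, 0 < s i)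
    (r : I → K → ℝ) (hr : ∀ i k, (i, k) ∈ E → 0 < r i k)
    (h : I → ℝ → ℝ → ℝ)
    (hdef : ∀ i z b, h i z b = (z - β i b) * ρ i b)
    (hρcont : ∀ i, ContinuousOn (ρ i) (Set.Icc 0 (bbar i)))
    (hβcont : ∀ i, ContinuousOn (β i) (Set.Icc 0 (bbar i)))
    (hβρpos : ∀ i, ∀ b ∈ Set.Ioc (0:ℝ) (bbar i), 0 < β i b * ρ i b)
    (S : Set ((I → K → ℝ) × (I → K → ℝ)))
    (hS : S = {xb | (∀ i k, 0 ≤ xb.1 i k) ∧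
      (∀ i, (∑ k ∈ Finset.univ.filter (fun k => (i, k) ∈ E), xb.1 i k) ≤ 1) ∧
      (∀ i k, (i, k) ∈ E → xb.2 i k ∈ Set.Icc (0:ℝ) (bbar i))})
    (prof : (I → K → ℝ) → (I → K → ℝ) → ℝ)
    (hprof : ∀ x b, prof x b = ∑ e ∈ E, h e.1 (r e.1 e.2) (b e.1 e.2) * s e.1 * x e.1 e.2)
    (v : (I → K → ℝ) → (I → K → ℝ) → K → ℝ)
    (hv : ∀ x b k, v x b k =
      ∑ i ∈ Finset.univ.filter (fun i => (i, k) ∈ E), r i k * s i * x i k * ρ i (b i k))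
    (u : (K → ℝ) → ℝ) (hu : ConcaveOn ℝ Set.univ u)
    (p : (K → ℝ) → EReal)
    (hp : ∀ lam, p lam = ⨆ w : K → ℝ, (((∑ k, lam k * w k) + u w : ℝ) : EReal))
    (F : (I → K → ℝ) → (I → K → ℝ) → ℝ)
    (hF : ∀ x b, F x b = prof x b + u (v x b))
    (Q : (K → ℝ) → EReal)
    (hQ : ∀ lam, Q lam =
      (⨆ xb ∈ S, ((prof xb.1 xb.2 - ∑ k, lam k * v xb.1 xb.2 k : ℝ) : EReal)) + p lam)
    (hpfin : ∀ lam, p lam ≠ ⊤)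
    (lamstar : K → ℝ) (hlam : ∀ lam, Q lamstar ≤ Q lam)
    (hUS : ∀ i k, (i, k) ∈ E → lamstar k < 1 →
      ∃! b0, b0 ∈ Set.Icc (0:ℝ) (bbar i) ∧
        ∀ b ∈ Set.Icc (0:ℝ) (bbar i),
          h i (r i k * (1 - lamstar k)) b ≤ h i (r i k * (1 - lamstar k)) b0) :
    ∃ xstar bstar : I → K → ℝ, (xstar, bstar) ∈ S ∧
      (∀ xb ∈ S, prof xb.1 xb.2 - ∑ k, lamstar k * v xb.1 xb.2 k ≤
        prof xstar bstar - ∑ k, lamstar k * v xstar bstar k) ∧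
      Q lamstar = ((F xstar bstar : ℝ) : EReal) := by
  obtain rfl : h = expectedSurplus ρ β := funext fun i => funext fun z => funext (hdef i z)
  obtain rfl : S = feasibleSet E bbar := hS
  obtain rfl : prof = profit E (expectedSurplus ρ β) r s := funext fun x => funext (hprof x)
  obtain rfl : v = campaignValue E ρ r s := funext fun x => funext fun b => funext (hv x b)
  have hbbar₀ : ∀ i, 0 ≤ bbar i := fun i => (hbbar i).le
  have hQ₀ : Q = dualFunction (edgeAllocations E ×ˢ edgeBids E bbar)
      (fun y => profit E (expectedSurplus ρ β) r s y.1 y.2)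
      (fun y => campaignValue E ρ r s y.1 y.2) u := by
    funext μ
    rw [hQ, hp, dualFunction, biSup_eq_biSup_of_mapsTo (prod_subset_feasibleSet bbar)
      (mapsTo_restrictEdges bbar) fun y _ => by
        rw [profit_restrictEdges, campaignValue_restrictEdges]]
    rfl
  obtain ⟨⟨x, b⟩, hy, hmax, hval⟩ := exists_isMaxOn_dualFunction_eq_of_isLocalMin
    (isCompact_edgeAllocations.prod (isCompact_edgeBids bbar))
    ⟨(0, 0), zero_mem_edgeAllocations, zero_mem_edgeBids hbbar₀⟩
    (continuousOn_profit hρcont hβcont r s) (continuousOn_campaignValue hρcont r s) hu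
    (fun μ => EReal.bddAbove_range_of_iSup_coe_ne_top (hp μ ▸ hpfin μ))
    (hQ₀ ▸ Eventually.of_forall hlam)
    (convex_campaignValue_image_setOf_isMaxOn hbbar₀ hs hr (fun i b hb => (hρ01 i b hb).1)
      hβρpos hUS)
  refine ⟨x, b, prod_subset_feasibleSet bbar hy, fun y hy' => ?_, by rw [hQ₀, hval, hF]⟩
  have hle := isMaxOn_iff.1 hmax _ (mapsTo_restrictEdges bbar hy')
  simp only [profit_restrictEdges, campaignValue_restrictEdges] at hle
  exact hle

theorem stmt_7
    {I K : Type*} [Fintype I] [Fintype K] [DecidableEq I] [DecidableEq K]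
    (E : Finset (I × K))
    (bbar : I → ℝ) (hbbar : ∀ i, 0 < bbar i)
    (ρ β : I → ℝ → ℝ)
    (hρmono : ∀ i, MonotoneOn (ρ i) (Set.Icc 0 (bbar i)))
    (hβmono : ∀ i, MonotoneOn (β i) (Set.Icc 0 (bbar i)))
    (hρ01 : ∀ i, ∀ b ∈ Set.Icc (0:ℝ) (bbar i), ρ i b ∈ Set.Icc (0:ℝ) 1)
    (hβb : ∀ i, ∀ b ∈ Set.Icc (0:ℝ) (bbar i), β i b ∈ Set.Icc (0:ℝ) b)
    (s : I → ℝ) (hs : ∀ i, 0 < s i)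
    (r : I → K → ℝ) (hr : ∀ i k, (i, k) ∈ E → 0 < r i k)
    (h : I → ℝ → ℝ → ℝ)
    (hdef : ∀ i z b, h i z b = (z - β i b) * ρ i b)
    (hρcont : ∀ i, ContinuousOn (ρ i) (Set.Icc 0 (bbar i)))
    (hβcont : ∀ i, ContinuousOn (β i) (Set.Icc 0 (bbar i)))
    (hβρpos : ∀ i, ∀ b ∈ Set.Ioc (0:ℝ) (bbar i), 0 < β i b * ρ i b)
    (S : Set ((I → K → ℝ) × (I → K → ℝ)))
    (hS : S = {xb | (∀ i k, 0 ≤ xb.1 i k) ∧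
      (∀ i, (∑ k ∈ Finset.univ.filter (fun k => (i, k) ∈ E), xb.1 i k) ≤ 1) ∧
      (∀ i k, (i, k) ∈ E → xb.2 i k ∈ Set.Icc (0:ℝ) (bbar i))})
    (prof : (I → K → ℝ) → (I → K → ℝ) → ℝ)
    (hprof : ∀ x b, prof x b = ∑ e ∈ E, h e.1 (r e.1 e.2) (b e.1 e.2) * s e.1 * x e.1 e.2)
    (v : (I → K → ℝ) → (I → K → ℝ) → K → ℝ)
    (hv : ∀ x b k, v x b k =
      ∑ i ∈ Finset.univ.filter (fun i => (i, k) ∈ E), r i k * s i * x i k * ρ i (b i k))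
    (u : (K → ℝ) → ℝ) (hu : ConcaveOn ℝ Set.univ u)
    (p : (K → ℝ) → EReal)
    (hp : ∀ lam, p lam = ⨆ w : K → ℝ, (((∑ k, lam k * w k) + u w : ℝ) : EReal))
    (F : (I → K → ℝ) → (I → K → ℝ) → ℝ)
    (hF : ∀ x b, F x b = prof x b + u (v x b))
    (Q : (K → ℝ) → EReal)
    (hQ : ∀ lam, Q lam =
      (⨆ xb ∈ S, ((prof xb.1 xb.2 - ∑ k, lam k * v xb.1 xb.2 k : ℝ) : EReal)) + p lam)
    (hpfin : ∀ lam, p lam ≠ ⊤)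
    (lamstar : K → ℝ) (hlam : ∀ lam, Q lamstar ≤ Q lam)
    (hUS : ∀ i k, (i, k) ∈ E → lamstar k < 1 →
      ∃! b0, b0 ∈ Set.Icc (0:ℝ) (bbar i) ∧
        ∀ b ∈ Set.Icc (0:ℝ) (bbar i),
          h i (r i k * (1 - lamstar k)) b ≤ h i (r i k * (1 - lamstar k)) b0) :
    ∃ xstar bstar : I → K → ℝ, (xstar, bstar) ∈ S ∧
      (∀ xb ∈ S, prof xb.1 xb.2 - ∑ k, lamstar k * v xb.1 xb.2 k ≤
        prof xstar bstar - ∑ k, lamstar k * v xstar bstar k) ∧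
      Q lamstar = ((F xstar bstar : ℝ) : EReal) :=
  stmt_7_general E bbar hbbar ρ β hρ01 s hs r hr h hdef hρcont hβcont hβρpos S hS prof hprof v hv u
    hu p hp F hF Q hQ hpfin lamstar hlam hUS
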